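/- Let f : X' → T' be a proper morphism of schemes, let T ⊆ T' be an open subscheme, and let X ⊆ X' be an open subscheme whose image under f is contained in T and which is topologically dense in X'. If the induced morphism X → T is proper, then X is exactly the preimage of T under f; that is, the commutative square formed by the open immersions X → X' and T → T' together with the morphisms X → T and f : X' → T' is Cartesian. -/

import Mathlib

open AlgebraicGeometry CategoryTheory CategoryTheory.Limits

/-!
The comparison map `h : X ⟶ X' ×_{T'} T` is an open immersion, since `X` and the fibre product are
both open in `X'`. It is universally closed, because `h ≫ snd = g` is proper and `snd` is
separated. Its image is therefore open, closed and dense, so `h` is surjective, and a surjective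
open immersion is an isomorphism.
-/

lemma DenseRange.of_comp_isOpenEmbedding {α β γ : Type*} [TopologicalSpace β]
    [TopologicalSpace γ] {f : α → β} {j : β → γ} (hj : Topology.IsOpenEmbedding j)
    (hjf : DenseRange (j ∘ f)) : DenseRange f := by
  have hrange : Set.range f = j ⁻¹' Set.range (j ∘ f) := by
    rw [Set.range_comp, hj.injective.preimage_image]
  rw [DenseRange, hrange]
  exact hjf.preimage hj.isOpenMap

lemma DenseRange.surjective_of_isClosedMap {α β : Type*} [TopologicalSpace α]
    [TopologicalSpace β] {f : α → β} (hd : DenseRange f) (hc : IsClosedMap f) :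
    Function.Surjective f :=
  Set.range_eq_univ.mp (hc.isClosed_range.closure_eq ▸ hd.closure_range)

lemma AlgebraicGeometry.isIso_of_isOpenImmersion_of_isClosedMap_of_denseRange {X Y : Scheme}
    (h : X ⟶ Y) [IsOpenImmersion h] (hc : IsClosedMap h.base) (hd : DenseRange h.base) :
    IsIso h := by
  rw [isIso_iff_isOpenImmersion_and_epi_base]
  exact ⟨inferInstance, (TopCat.epi_iff_surjective _).mpr (hd.surjective_of_isClosedMap hc)⟩

/-- Let `f : X' ⟶ T'` be a proper morphism of schemes, `iT : T ⟶ T'` an open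
immersion (an open subscheme), and `iX : X ⟶ X'` an open immersion whose image under `f` lands
in `T` (witnessed by the morphism `g : X ⟶ T` with `iX ≫ f = g ≫ iT`) and which is
topologically dense in `X'`.  If the induced morphism `g : X ⟶ T` is proper, then the
commutative square is Cartesian, i.e. `X` is exactly the preimage of `T` under `f`. -/
theorem stmt0 {X X' T T' : Scheme} (f : X' ⟶ T') (g : X ⟶ T) (iX : X ⟶ X') (iT : T ⟶ T')
    [IsOpenImmersion iX] [IsOpenImmersion iT] [IsProper f] [IsProper g]
    (hcomm : iX ≫ f = g ≫ iT) (hdense : DenseRange iX.base) :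
    IsPullback iX g f iT := by
  let h : X ⟶ pullback f iT := pullback.lift iX g hcomm
  have hfst : h ≫ pullback.fst f iT = iX := pullback.lift_fst _ _ _
  have hsnd : h ≫ pullback.snd f iT = g := pullback.lift_snd _ _ _
  have : IsOpenImmersion (h ≫ pullback.fst f iT) := hfst ▸ inferInstance
  have : IsOpenImmersion h := .of_comp h (pullback.fst f iT)
  have : UniversallyClosed (h ≫ pullback.snd f iT) := hsnd ▸ inferInstance
  have : UniversallyClosed h := .of_comp_of_isSeparated h (pullback.snd f iT)
  have hdense_h : DenseRange h.base :=
    .of_comp_isOpenEmbedding (pullback.fst f iT).isOpenEmbedding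
      (by rwa [← hfst, Scheme.Hom.comp_base, TopCat.coe_comp] at hdense)
  have := isIso_of_isOpenImmersion_of_isClosedMap_of_denseRange h h.isClosedMap hdense_h
  exact IsPullback.of_iso_pullback ⟨hcomm⟩ (asIso h) hfst hsnd
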